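/- arXiv:2503.17839 — 3 statements merged into one kernel-verified Lean document; each statement's English description precedes it below -/
import Mathlib

section
/- For an integer budget β with 0 ≤ β ≤ n, every extreme point of the budgeted uncertainty set U(β) has the form u_k = ū_k + û_k σ_k where σ ∈ {−1, 0, 1}ⁿ and the number of nonzero entries of σ is at most β; conversely every such point with exactly min(β, n) nonzero entries is an extreme point. -/
open Finset

private lemma sum_upd1 {n : ℕ} (g : Fin n → ℝ → ℝ) (u w : Fin n → ℝ) (k : Fin n)
    (hw : ∀ i, i ≠ k → w i = u i) :
    ∑ i, g i (w i) = ∑ i, g i (u i) - g k (u k) + g k (w k) := by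
  have h : ∀ f : Fin n → ℝ,
      ∑ i, g i (f i) = g k (f k) + ∑ i ∈ univ.erase k, g i (f i) := fun f =>
    (Finset.add_sum_erase _ _ (mem_univ k)).symm
  rw [h w, h u]
  have : ∑ i ∈ univ.erase k, g i (w i) = ∑ i ∈ univ.erase k, g i (u i) :=
    Finset.sum_congr rfl fun i hi => by rw [hw i (Finset.mem_erase.mp hi).1]
  rw [this]; ring

private lemma sum_upd2 {n : ℕ} (g : Fin n → ℝ → ℝ) (u w : Fin n → ℝ) (k j : Fin n) (hkj : j ≠ k)
    (hw : ∀ i, i ≠ k → i ≠ j → w i = u i) :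
    ∑ i, g i (w i) = ∑ i, g i (u i) - g k (u k) - g j (u j) + g k (w k) + g j (w j) := by
  have h : ∀ f : Fin n → ℝ,
      ∑ i, g i (f i) = g k (f k) + (g j (f j) + ∑ i ∈ (univ.erase k).erase j, g i (f i)) := by
    intro f
    rw [← Finset.add_sum_erase _ _ (mem_univ k),
      ← Finset.add_sum_erase _ _ (Finset.mem_erase.mpr ⟨hkj, mem_univ j⟩)]
  rw [h w, h u]
  have : ∑ i ∈ (univ.erase k).erase j, g i (w i) = ∑ i ∈ (univ.erase k).erase j, g i (u i) :=
    Finset.sum_congr rfl fun i hi => by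
      rw [hw i (Finset.mem_erase.mp (Finset.mem_erase.mp hi).2).1 (Finset.mem_erase.mp hi).1]
  rw [this]; ring

private lemma abs_pert {d e s : ℝ} (hs : s = if 0 < d then 1 else -1) (hd : d ≠ 0)
    (he : 0 ≤ e) (he' : e ≤ |d|) :
    |d + s * e| = |d| + e ∧ |d - s * e| = |d| - e := by
  rcases hd.lt_or_gt with h | h
  · rw [hs, if_neg (not_lt.mpr h.le)]
    rw [abs_of_neg h] at he' ⊢
    constructor
    · rw [show d + -1 * e = -(-d + e) by ring, abs_neg, abs_of_nonneg (by linarith)]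
    · rw [show d - -1 * e = -(-d - e) by ring, abs_neg, abs_of_nonneg (by linarith)]
  · rw [hs, if_pos h]
    rw [abs_of_pos h] at he' ⊢
    constructor
    · rw [show d + 1 * e = d + e by ring, abs_of_nonneg (by linarith)]
    · rw [show d - 1 * e = d - e by ring, abs_of_nonneg (by linarith)]

def budgetSet (n : ℕ) (ub uh : Fin n → ℝ) (β : ℝ) : Set (Fin n → ℝ) :=
  {u | (∀ k, |u k - ub k| ≤ uh k) ∧ ∑ k, |u k - ub k| / uh k ≤ β}

private lemma dir1 (n : ℕ) (ub uh : Fin n → ℝ) (huh : ∀ k, 0 < uh k) (β : ℕ)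
    (u : Fin n → ℝ) (hu : u ∈ Set.extremePoints ℝ (budgetSet n ub uh (β : ℝ))) :
    ∃ σ : Fin n → ℝ, (∀ k, σ k = -1 ∨ σ k = 0 ∨ σ k = 1) ∧
      (Finset.univ.filter fun k => σ k ≠ 0).card ≤ β ∧
      ∀ k, u k = ub k + uh k * σ k := by
  obtain ⟨⟨hbox, hbud⟩, hext⟩ := hu
  have refute : ∀ v : Fin n → ℝ, ∀ k, v k ≠ 0 → (u + v) ∈ budgetSet n ub uh (β : ℝ) →
      (u - v) ∈ budgetSet n ub uh (β : ℝ) → False := by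
    intro v k hvk h1 h2
    have hseg : u ∈ openSegment ℝ (u + v) (u - v) := by
      refine ⟨1/2, 1/2, by norm_num, by norm_num, by norm_num, ?_⟩
      funext i
      simp only [Pi.add_apply, Pi.sub_apply, Pi.smul_apply, smul_eq_mul]
      ring
    have h3 := hext h1 h2 hseg
    have h4 := congrFun h3 k
    simp only [Pi.add_apply] at h4
    exact hvk (by linarith)
  have claim : ∀ k, u k = ub k ∨ |u k - ub k| = uh k := by
    intro k
    by_contra hcon
    push_neg at hcon
    obtain ⟨hk0, hk1⟩ := hcon
    have hdk : 0 < |u k - ub k| := abs_pos.mpr (sub_ne_zero.mpr hk0)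
    have hdk1 : |u k - ub k| < uh k := lt_of_le_of_ne (hbox k) hk1
    by_cases hS : ∑ i, |u i - ub i| / uh i < β
    · -- budget slack : single-coordinate perturbation
      set ε := min (uh k - |u k - ub k|) ((β - ∑ i, |u i - ub i| / uh i) * uh k) with hε'
      have hε : 0 < ε :=
        lt_min (by linarith) (mul_pos (by linarith) (huh k))
      have hε1 : ε ≤ uh k - |u k - ub k| := min_le_left _ _
      have hε2 : ε / uh k ≤ (β : ℝ) - ∑ i, |u i - ub i| / uh i :=
        (div_le_iff₀ (huh k)).mpr (min_le_right _ _)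
      set v : Fin n → ℝ := fun i => if i = k then ε else 0 with hv
      have hvk : v k ≠ 0 := by simp [hv, hε.ne']
      have hup : (u + v) k = u k + ε := by simp [hv]
      have hdn : (u - v) k = u k - ε := by simp [hv]
      have hwp : ∀ i, i ≠ k → (u + v) i = u i := by
        intro i hi; simp [hv, hi]
      have hwn : ∀ i, i ≠ k → (u - v) i = u i := by
        intro i hi; simp [hv, hi]
      have habs1 : |u k + ε - ub k| ≤ |u k - ub k| + ε := by
        calc |u k + ε - ub k| = |(u k - ub k) + ε| := by ring_nf
          _ ≤ |u k - ub k| + |ε| := abs_add_le _ _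
          _ = |u k - ub k| + ε := by rw [abs_of_pos hε]
      have habs2 : |u k - ε - ub k| ≤ |u k - ub k| + ε := by
        calc |u k - ε - ub k| = |(u k - ub k) + (-ε)| := by ring_nf
          _ ≤ |u k - ub k| + |(-ε)| := abs_add_le _ _
          _ = |u k - ub k| + ε := by rw [abs_neg, abs_of_pos hε]
      refine refute v k hvk ⟨?_, ?_⟩ ⟨?_, ?_⟩
      · intro i
        by_cases hi : i = k
        · subst hi; rw [hup]; linarith
        · rw [hwp i hi]; exact hbox i
      · calc ∑ i, |(u + v) i - ub i| / uh i
            = ∑ i, |u i - ub i| / uh i - |u k - ub k| / uh k + |(u + v) k - ub k| / uh k :=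
              sum_upd1 (fun i t => |t - ub i| / uh i) u (u + v) k hwp
          _ ≤ (β : ℝ) := by
              rw [hup]
              have h5 : |u k + ε - ub k| / uh k ≤ (|u k - ub k| + ε) / uh k := by
                gcongr
                exact (huh k).le
              rw [add_div] at h5
              linarith
      · intro i
        by_cases hi : i = k
        · subst hi; rw [hdn]; linarith
        · rw [hwn i hi]; exact hbox i
      · calc ∑ i, |(u - v) i - ub i| / uh i
            = ∑ i, |u i - ub i| / uh i - |u k - ub k| / uh k + |(u - v) k - ub k| / uh k :=
              sum_upd1 (fun i t => |t - ub i| / uh i) u (u - v) k hwn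
          _ ≤ (β : ℝ) := by
              rw [hdn]
              have h5 : |u k - ε - ub k| / uh k ≤ (|u k - ub k| + ε) / uh k := by
                gcongr
                exact (huh k).le
              rw [add_div] at h5
              linarith
    · -- budget tight : two-coordinate perturbation
      have hSeq : ∑ i, |u i - ub i| / uh i = (β : ℝ) := le_antisymm hbud (not_lt.mp hS)
      have hex : ∃ j, j ≠ k ∧ u j ≠ ub j ∧ |u j - ub j| < uh j := by
        by_contra hno
        push_neg at hno
        have hval : ∀ j ∈ univ.erase k, |u j - ub j| / uh j
            = if u j ≠ ub j then (1:ℝ) else 0 := by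
          intro j hj
          have hjk := (Finset.mem_erase.mp hj).1
          by_cases h : u j = ub j
          · simp [h]
          · rw [if_pos h, le_antisymm (hbox j) (hno j hjk h), div_self (huh j).ne']
        have hsum : ∑ j ∈ univ.erase k, |u j - ub j| / uh j
            = ((univ.erase k).filter (fun j => u j ≠ ub j)).card := by
          rw [Finset.sum_congr rfl hval, Finset.sum_boole]
        have hsplit : ∑ j, |u j - ub j| / uh j
            = |u k - ub k| / uh k + ∑ j ∈ univ.erase k, |u j - ub j| / uh j :=
          (Finset.add_sum_erase _ _ (mem_univ k)).symm
        set m := ((univ.erase k).filter (fun j => u j ≠ ub j)).card with hm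
        have htk0 : 0 < |u k - ub k| / uh k := div_pos hdk (huh k)
        have htk1 : |u k - ub k| / uh k < 1 := (div_lt_one (huh k)).mpr hdk1
        have h1 : (m : ℝ) < β := by rw [← hSeq, hsplit, hsum]; linarith
        have h2 : (β : ℝ) < m + 1 := by rw [← hSeq, hsplit, hsum]; linarith
        have h1' : m < β := by exact_mod_cast h1
        have h2' : β < m + 1 := by exact_mod_cast h2
        omega
      obtain ⟨j, hjk, hj0, hj1⟩ := hex
      have hdj : 0 < |u j - ub j| := abs_pos.mpr (sub_ne_zero.mpr hj0)
      set sk : ℝ := if 0 < u k - ub k then 1 else -1 with hsk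
      set sj : ℝ := if 0 < u j - ub j then 1 else -1 with hsj
      set δ := min (min ((uh k - |u k - ub k|) / uh k) (|u k - ub k| / uh k))
        (min ((uh j - |u j - ub j|) / uh j) (|u j - ub j| / uh j)) with hδ'
      have hδ : 0 < δ := by
        refine lt_min (lt_min ?_ ?_) (lt_min ?_ ?_) <;>
          exact div_pos (by linarith) (huh _)
      have hbk1 : δ * uh k ≤ uh k - |u k - ub k| :=
        (le_div_iff₀ (huh k)).mp (le_trans (min_le_left _ _) (min_le_left _ _))
      have hbk2 : δ * uh k ≤ |u k - ub k| :=
        (le_div_iff₀ (huh k)).mp (le_trans (min_le_left _ _) (min_le_right _ _))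
      have hbj1 : δ * uh j ≤ uh j - |u j - ub j| :=
        (le_div_iff₀ (huh j)).mp (le_trans (min_le_right _ _) (min_le_left _ _))
      have hbj2 : δ * uh j ≤ |u j - ub j| :=
        (le_div_iff₀ (huh j)).mp (le_trans (min_le_right _ _) (min_le_right _ _))
      have hek : (0:ℝ) ≤ δ * uh k := mul_nonneg hδ.le (huh k).le
      have hej : (0:ℝ) ≤ δ * uh j := mul_nonneg hδ.le (huh j).le
      obtain ⟨hpk1, hpk2⟩ := abs_pert hsk (sub_ne_zero.mpr hk0) hek hbk2
      obtain ⟨hpj1, hpj2⟩ := abs_pert hsj (sub_ne_zero.mpr hj0) hej hbj2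
      set v : Fin n → ℝ :=
        fun i => if i = k then δ * sk * uh k else if i = j then -(δ * sj * uh j) else 0 with hv
      have hskne : sk ≠ 0 := by rw [hsk]; split <;> norm_num
      have hvk : v k ≠ 0 := by
        simp only [hv, if_pos rfl]
        exact mul_ne_zero (mul_ne_zero hδ.ne' hskne) (huh k).ne'
      have hup : (u + v) k = u k + δ * sk * uh k := by simp [hv]
      have hupj : (u + v) j = u j - δ * sj * uh j := by simp [hv, hjk]; ring
      have hdnk : (u - v) k = u k - δ * sk * uh k := by simp [hv]
      have hdnj : (u - v) j = u j + δ * sj * uh j := by simp [hv, hjk]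
      have hwp : ∀ i, i ≠ k → i ≠ j → (u + v) i = u i := by
        intro i hik hij; simp [hv, hik, hij]
      have hwn : ∀ i, i ≠ k → i ≠ j → (u - v) i = u i := by
        intro i hik hij; simp [hv, hik, hij]
      have habsup : |(u + v) k - ub k| = |u k - ub k| + δ * uh k := by
        rw [hup, show u k + δ * sk * uh k - ub k = (u k - ub k) + sk * (δ * uh k) by ring]
        rw [hpk1]
      have habsupj : |(u + v) j - ub j| = |u j - ub j| - δ * uh j := by
        rw [hupj, show u j - δ * sj * uh j - ub j = (u j - ub j) - sj * (δ * uh j) by ring]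
        rw [hpj2]
      have habsdnk : |(u - v) k - ub k| = |u k - ub k| - δ * uh k := by
        rw [hdnk, show u k - δ * sk * uh k - ub k = (u k - ub k) - sk * (δ * uh k) by ring]
        rw [hpk2]
      have habsdnj : |(u - v) j - ub j| = |u j - ub j| + δ * uh j := by
        rw [hdnj, show u j + δ * sj * uh j - ub j = (u j - ub j) + sj * (δ * uh j) by ring]
        rw [hpj1]
      have ediv : ∀ c : ℝ, 0 < c → δ * c / c = δ := by
        intro c hc; field_simp
      refine refute v k hvk ⟨?_, ?_⟩ ⟨?_, ?_⟩
      · intro i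
        by_cases hik : i = k
        · subst hik; rw [habsup]; linarith
        · by_cases hij : i = j
          · subst hij; rw [habsupj]; linarith [hbox i]
          · rw [hwp i hik hij]; exact hbox i
      · calc ∑ i, |(u + v) i - ub i| / uh i
            = ∑ i, |u i - ub i| / uh i - |u k - ub k| / uh k - |u j - ub j| / uh j
              + |(u + v) k - ub k| / uh k + |(u + v) j - ub j| / uh j :=
              sum_upd2 (fun i t => |t - ub i| / uh i) u (u + v) k j hjk hwp
          _ ≤ (β : ℝ) := by
              rw [habsup, habsupj, sub_div, add_div, ediv _ (huh k), ediv _ (huh j), hSeq]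
              ring_nf
              linarith
      · intro i
        by_cases hik : i = k
        · subst hik; rw [habsdnk]; linarith [hbox i]
        · by_cases hij : i = j
          · subst hij; rw [habsdnj]; linarith
          · rw [hwn i hik hij]; exact hbox i
      · calc ∑ i, |(u - v) i - ub i| / uh i
            = ∑ i, |u i - ub i| / uh i - |u k - ub k| / uh k - |u j - ub j| / uh j
              + |(u - v) k - ub k| / uh k + |(u - v) j - ub j| / uh j :=
              sum_upd2 (fun i t => |t - ub i| / uh i) u (u - v) k j hjk hwn
          _ ≤ (β : ℝ) := by
              rw [habsdnk, habsdnj, sub_div, add_div, ediv _ (huh k), ediv _ (huh j), hSeq]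
              ring_nf
              linarith
  refine ⟨fun k => (u k - ub k) / uh k, ?_, ?_, ?_⟩
  · intro k
    rcases claim k with h | h
    · right; left; show (u k - ub k) / uh k = 0; rw [h]; simp
    · rcases (abs_eq (huh k).le).mp h with h' | h'
      · right; right; show (u k - ub k) / uh k = 1; rw [h', div_self (huh k).ne']
      · left; show (u k - ub k) / uh k = -1; rw [h', neg_div, div_self (huh k).ne']
  · have h1 : ∀ k ∈ Finset.univ.filter (fun k => (u k - ub k) / uh k ≠ 0),
        |u k - ub k| / uh k = 1 := by
      intro k hk
      have hk' := (Finset.mem_filter.mp hk).2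
      rcases claim k with h | h
      · exact absurd (by rw [h]; simp) hk'
      · rw [h, div_self (huh k).ne']
    have hsub : ∑ k ∈ Finset.univ.filter (fun k => (u k - ub k) / uh k ≠ 0),
        |u k - ub k| / uh k
        = ((Finset.univ.filter (fun k => (u k - ub k) / uh k ≠ 0)).card : ℝ) := by
      rw [Finset.sum_congr rfl h1, Finset.sum_const, nsmul_eq_mul, mul_one]
    have hle : ∑ k ∈ Finset.univ.filter (fun k => (u k - ub k) / uh k ≠ 0),
        |u k - ub k| / uh k ≤ ∑ k, |u k - ub k| / uh k :=
      Finset.sum_le_sum_of_subset_of_nonneg (Finset.filter_subset _ _)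
        (fun i _ _ => div_nonneg (abs_nonneg _) (huh i).le)
    have : ((Finset.univ.filter (fun k => (u k - ub k) / uh k ≠ 0)).card : ℝ) ≤ (β : ℝ) := by
      rw [← hsub]; linarith
    exact_mod_cast this
  · intro k
    show u k = ub k + uh k * ((u k - ub k) / uh k)
    rw [mul_comm (uh k), div_mul_cancel₀ _ (huh k).ne']
    ring

private lemma comb_eq_max {a b x y c : ℝ} (ha : 0 < a) (hb : 0 < b) (hab : a + b = 1)
    (hx : x ≤ c) (hy : y ≤ c) (h : a * x + b * y = c) : x = c ∧ y = c := by
  have hc : a * c + b * c = c := by rw [← add_mul, hab, one_mul]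
  have h1 : a * c ≤ a * x := by nlinarith [mul_le_mul_of_nonneg_left hy hb.le]
  have h2 : b * c ≤ b * y := by nlinarith [mul_le_mul_of_nonneg_left hx ha.le]
  exact ⟨le_antisymm hx (le_of_mul_le_mul_left h1 ha),
    le_antisymm hy (le_of_mul_le_mul_left h2 hb)⟩

private lemma dir2 (n : ℕ) (ub uh : Fin n → ℝ)
    (huh : ∀ k, 0 < uh k) (β : ℕ) (hβ : β ≤ n)
    (σ : Fin n → ℝ) (hσ : ∀ k, σ k = -1 ∨ σ k = 0 ∨ σ k = 1)
    (hcard : (Finset.univ.filter fun k => σ k ≠ 0).card = min β n) :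
    (fun k => ub k + uh k * σ k) ∈
      Set.extremePoints ℝ (budgetSet n ub uh (β : ℝ)) := by
  rw [min_eq_left hβ] at hcard
  set u : Fin n → ℝ := fun k => ub k + uh k * σ k with hu
  have habs : ∀ k, |u k - ub k| = uh k * |σ k| := by
    intro k
    rw [show u k - ub k = uh k * σ k by simp [hu], abs_mul, abs_of_pos (huh k)]
  have hone : ∀ k, σ k ≠ 0 → |σ k| = 1 := by
    intro k hk; rcases hσ k with h | h | h <;> simp [h] at hk ⊢
  have hterm : ∀ z : Fin n → ℝ, ∀ k, z k = u k → σ k ≠ 0 → |z k - ub k| / uh k = 1 := by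
    intro z k hz hk
    rw [hz, habs k, hone k hk, mul_one, div_self (huh k).ne']
  have hmem : u ∈ budgetSet n ub uh β := by
    constructor
    · intro k
      rw [habs k]
      rcases hσ k with h | h | h <;> simp [h, (huh k).le]
    · have hc : ∀ k ∈ Finset.univ, |u k - ub k| / uh k
          = if σ k ≠ 0 then (1:ℝ) else 0 := by
        intro k _
        by_cases hk : σ k = 0
        · simp [hk, habs k]
        · rw [if_pos hk, hterm u k rfl hk]
      rw [Finset.sum_congr rfl hc, Finset.sum_boole, hcard]
  refine ⟨hmem, ?_⟩
  intro x hx y hy hseg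
  obtain ⟨a, b, ha, hb, hab, hxy⟩ := hseg
  have hxy' : ∀ k, a * x k + b * y k = u k := by
    intro k
    have := congrFun hxy k
    simpa using this
  have key : ∀ z : Fin n → ℝ, z ∈ budgetSet n ub uh β →
      (∀ k, |z k - ub k| ≤ uh k) → ∀ k, σ k ≠ 0 →
      (a * x k + b * y k = u k) → True := fun _ _ _ _ _ _ => trivial
  have hkeq : ∀ k, σ k ≠ 0 → x k = u k ∧ y k = u k := by
    intro k hk
    rcases hσ k with h | h | h
    · have hux : u k ≤ x k := by
        have := (abs_le.mp (hx.1 k)).1; linarith [show u k = ub k - uh k by simp [hu, h]; ring]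
      have huy : u k ≤ y k := by
        have := (abs_le.mp (hy.1 k)).1; linarith [show u k = ub k - uh k by simp [hu, h]; ring]
      have := comb_eq_max ha hb hab (x := -x k) (y := -y k) (c := -u k)
        (by linarith) (by linarith) (by have := hxy' k; linarith)
      constructor <;> linarith [this.1, this.2]
    · exact absurd h hk
    · have hux : x k ≤ u k := by
        have := (abs_le.mp (hx.1 k)).2; linarith [show u k = ub k + uh k by simp [hu, h]]
      have huy : y k ≤ u k := by
        have := (abs_le.mp (hy.1 k)).2; linarith [show u k = ub k + uh k by simp [hu, h]]
      exact comb_eq_max ha hb hab hux huy (hxy' k)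
  have main : ∀ z : Fin n → ℝ, z ∈ budgetSet n ub uh β →
      (∀ k, σ k ≠ 0 → z k = u k) → z = u := by
    intro z hz hzk
    funext k
    by_cases hk : σ k = 0
    · have hsplit := Finset.sum_filter_add_sum_filter_not Finset.univ
        (fun i => σ i ≠ 0) (fun i => |z i - ub i| / uh i)
      have hA : ∑ i ∈ Finset.univ.filter (fun i => σ i ≠ 0), |z i - ub i| / uh i
          = (β : ℝ) := by
        rw [Finset.sum_congr rfl (fun i hi =>
          hterm z i (hzk i (Finset.mem_filter.mp hi).2) (Finset.mem_filter.mp hi).2),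
          Finset.sum_const, hcard, nsmul_eq_mul, mul_one]
      have hnonneg : ∀ i ∈ Finset.univ.filter (fun i => ¬ σ i ≠ 0),
          0 ≤ |z i - ub i| / uh i := fun i _ => div_nonneg (abs_nonneg _) (huh i).le
      have hB : ∑ i ∈ Finset.univ.filter (fun i => ¬ σ i ≠ 0), |z i - ub i| / uh i = 0 := by
        have h2 := hz.2
        have h3 := Finset.sum_nonneg hnonneg
        linarith
      have hC := (Finset.sum_eq_zero_iff_of_nonneg hnonneg).mp hB k
        (Finset.mem_filter.mpr ⟨Finset.mem_univ k, by simp [hk]⟩)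
      have hz0 : z k = ub k := by
        field_simp [(huh k).ne'] at hC
        rw [mul_zero, abs_eq_zero] at hC
        linarith
      rw [hz0]; simp [hu, hk]
    · exact hzk k hk
  exact main x hx (fun k hk => (hkeq k hk).1)

theorem budgetSet_extremePoints (n : ℕ) (ub uh : Fin n → ℝ)
    (huh : ∀ k, 0 < uh k) (β : ℕ) (hβ : β ≤ n) :
    (∀ u ∈ Set.extremePoints ℝ (budgetSet n ub uh (β : ℝ)),
      ∃ σ : Fin n → ℝ, (∀ k, σ k = -1 ∨ σ k = 0 ∨ σ k = 1) ∧
        (Finset.univ.filter fun k => σ k ≠ 0).card ≤ β ∧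
        ∀ k, u k = ub k + uh k * σ k) ∧
    (∀ σ : Fin n → ℝ, (∀ k, σ k = -1 ∨ σ k = 0 ∨ σ k = 1) →
      (Finset.univ.filter fun k => σ k ≠ 0).card = min β n →
      (fun k => ub k + uh k * σ k) ∈
        Set.extremePoints ℝ (budgetSet n ub uh (β : ℝ))) := by
  exact ⟨fun u hu => dir1 n ub uh huh β u hu,
    fun σ hσ hcard => dir2 n ub uh huh β hβ σ hσ hcard⟩
end

section
/- If f : ℝⁿ → ℝ is convex (in particular, linear), then the supremum of f over the budgeted uncertainty set U(β) with integer budget β is attained at a point of the form u_k = ū_k + û_k σ_k with σ ∈ {−1, 0, 1}ⁿ and Σ_k |σ_k| ≤ β. -/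
open Finset

attribute [local instance] Classical.propDecidable

noncomputable def sg (a : ℝ) : ℝ := if 0 < a then 1 else -1

lemma sg_cases (a : ℝ) : sg a = 1 ∨ sg a = -1 := by
  unfold sg; split <;> simp

lemma abs_sg (a : ℝ) : |sg a| = 1 := by
  rcases sg_cases a with h | h <;> simp [h]

lemma abs_add_sg (a ε : ℝ) (hε : 0 ≤ ε) : |a + sg a * ε| = |a| + ε := by
  unfold sg; split
  · rename_i h
    rw [abs_of_pos h, abs_of_pos (by linarith)]; ring
  · rename_i h
    push_neg at h
    rw [abs_of_nonpos h, abs_of_nonpos (by linarith)]; ring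

lemma abs_sub_sg (a ε : ℝ) (hε : 0 ≤ ε) (h : ε ≤ |a|) : |a - sg a * ε| = |a| - ε := by
  unfold sg at *; split
  · rename_i h'
    rw [abs_of_pos h'] at h ⊢
    rw [abs_of_nonneg (by linarith)]; ring
  · rename_i h'
    push_neg at h'
    rw [abs_of_nonpos h'] at h ⊢
    rw [abs_of_nonpos (by linarith)]; ring

lemma sg_mul_abs (a : ℝ) (h : a ≠ 0) : sg a * |a| = a := by
  unfold sg; split
  · rename_i h'; rw [abs_of_pos h']; ring
  · rename_i h'; push_neg at h'
    rw [abs_of_nonpos h']; ring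

noncomputable def bad {n : ℕ} (t : Fin n → ℝ) : Finset (Fin n) :=
  Finset.univ.filter (fun k => ¬(t k = -1 ∨ t k = 0 ∨ t k = 1))

lemma mem_bad {n : ℕ} {t : Fin n → ℝ} {k : Fin n} :
    k ∈ bad t ↔ ¬(t k = -1 ∨ t k = 0 ∨ t k = 1) := by
  simp [bad]

noncomputable def mu {n : ℕ} (β : ℕ) (t : Fin n → ℝ) : ℕ :=
  2 * (bad t).card + (if (∑ k, |t k|) < (β : ℝ) then 1 else 0)

lemma sum_split2 {n : ℕ} (F : Fin n → ℝ) (j k : Fin n) (hjk : j ≠ k) :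
    ∑ l, F l = F j + F k + ∑ l ∈ (Finset.univ.erase j).erase k, F l := by
  rw [← Finset.add_sum_erase _ F (mem_univ j),
    ← Finset.add_sum_erase _ F (Finset.mem_erase.2 ⟨Ne.symm hjk, mem_univ k⟩)]
  ring

lemma sum_split1 {n : ℕ} (F : Fin n → ℝ) (j : Fin n) :
    ∑ l, F l = F j + ∑ l ∈ Finset.univ.erase j, F l :=
  (Finset.add_sum_erase _ F (mem_univ j)).symm

lemma bad_abs_pos {a : ℝ} (h : ¬(a = -1 ∨ a = 0 ∨ a = 1)) : 0 < |a| := by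
  push_neg at h; exact abs_pos.2 h.2.1

lemma bad_abs_lt {a : ℝ} (h : ¬(a = -1 ∨ a = 0 ∨ a = 1)) (h1 : |a| ≤ 1) : |a| < 1 := by
  push_neg at h
  rcases lt_or_eq_of_le h1 with h' | h'
  · exact h'
  · rcases (abs_eq (by norm_num : (0:ℝ) ≤ 1)).1 h' with h'' | h''
    · exact absurd h'' h.2.2
    · exact absurd h'' h.1

lemma convex_between {n : ℕ} {g : (Fin n → ℝ) → ℝ} (hg : ConvexOn ℝ Set.univ g)
    (t t₁ t₂ : Fin n → ℝ) (θ : ℝ) (h0 : 0 ≤ θ) (h1 : θ ≤ 1)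
    (ht : t = θ • t₁ + (1 - θ) • t₂) : g t ≤ max (g t₁) (g t₂) := by
  have hseg : t ∈ segment ℝ t₁ t₂ := ⟨θ, 1 - θ, h0, by linarith, by ring, ht.symm⟩
  exact hg.le_on_segment (Set.mem_univ t₁) (Set.mem_univ t₂) hseg

lemma bad_update_subset_erase {n : ℕ} (t : Fin n → ℝ) (j k : Fin n) (x y : ℝ)
    (hjk : j ≠ k) (hj : j ∈ bad t) (hk : k ∈ bad t)
    (hint : (Function.update (Function.update t j x) k y) j = -1 ∨
            (Function.update (Function.update t j x) k y) j = 0 ∨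
            (Function.update (Function.update t j x) k y) j = 1) :
    bad (Function.update (Function.update t j x) k y) ⊆ (bad t).erase j := by
  intro l hl
  have hlmem := mem_bad.1 hl
  rcases eq_or_ne l j with rfl | hlj
  · exact absurd hint hlmem
  · rcases eq_or_ne l k with rfl | hlk
    · exact Finset.mem_erase.2 ⟨hlj, hk⟩
    · refine Finset.mem_erase.2 ⟨hlj, mem_bad.2 ?_⟩
      rwa [Function.update_of_ne hlk, Function.update_of_ne hlj] at hlmem

lemma card_bad_lt {n : ℕ} {t t' : Fin n → ℝ} {j : Fin n} (hj : j ∈ bad t)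
    (hsub : bad t' ⊆ (bad t).erase j) : (bad t').card + 1 ≤ (bad t).card := by
  have h1 := Finset.card_le_card hsub
  rw [Finset.card_erase_of_mem hj] at h1
  have h2 : 1 ≤ (bad t).card := Finset.card_pos.2 ⟨j, hj⟩
  omega

lemma step {n : ℕ} (β : ℕ) (g : (Fin n → ℝ) → ℝ) (hg : ConvexOn ℝ Set.univ g)
    (t : Fin n → ℝ) (h1 : ∀ k, |t k| ≤ 1) (h2 : (∑ k, |t k|) ≤ (β : ℝ))
    (hb : (bad t).Nonempty) :
    ∃ t₁ t₂ : Fin n → ℝ,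
      ((∀ k, |t₁ k| ≤ 1) ∧ (∑ k, |t₁ k|) ≤ (β : ℝ) ∧ mu β t₁ < mu β t) ∧
      ((∀ k, |t₂ k| ≤ 1) ∧ (∑ k, |t₂ k|) ≤ (β : ℝ) ∧ mu β t₂ < mu β t) ∧
      g t ≤ max (g t₁) (g t₂) := by
  by_cases hsl : (∑ k, |t k|) < (β : ℝ)
  · -- slack case
    obtain ⟨k₀, hk₀⟩ := hb
    have hk := mem_bad.1 hk₀
    set a := t k₀ with ha_def
    have hane : a ≠ 0 := by push_neg at hk; exact hk.2.1
    have ha0 : 0 < |a| := bad_abs_pos hk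
    have ha1 : |a| < 1 := bad_abs_lt hk (h1 k₀)
    set s := (β : ℝ) - ∑ k, |t k| with hs_def
    have hs : 0 < s := by simp only [hs_def]; linarith
    set m := min 1 (|a| + s) with hm_def
    have hm_pos : 0 < m := lt_min one_pos (by linarith)
    have hm_le1 : m ≤ 1 := min_le_left _ _
    set bv := sg a * m with hbv_def
    have habs_b : |bv| = m := by
      rw [hbv_def, abs_mul, abs_sg, one_mul, abs_of_pos hm_pos]
    have hab : |a| < |bv| := by rw [habs_b, hm_def]; exact lt_min ha1 (by linarith)
    set t₁ := Function.update t k₀ bv with ht₁_def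
    set t₂ := Function.update t k₀ (0:ℝ) with ht₂_def
    have ht₁k : t₁ k₀ = bv := Function.update_self _ _ _
    have ht₂k : t₂ k₀ = 0 := Function.update_self _ _ _
    have ht₁o : ∀ l, l ≠ k₀ → t₁ l = t l := fun l hl => Function.update_of_ne hl _ _
    have ht₂o : ∀ l, l ≠ k₀ → t₂ l = t l := fun l hl => Function.update_of_ne hl _ _
    set R := ∑ l ∈ Finset.univ.erase k₀, |t l| with hR_def
    have hsum_t : ∑ l, |t l| = |a| + R := sum_split1 (fun l => |t l|) k₀
    have hsum_t₁ : ∑ l, |t₁ l| = |bv| + R := by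
      rw [sum_split1 (fun l => |t₁ l|) k₀, ht₁k, hR_def]
      congr 1
      exact Finset.sum_congr rfl fun l hl => by
        rw [ht₁o l (Finset.mem_erase.1 hl).1]
    have hsum_t₂ : ∑ l, |t₂ l| = R := by
      rw [sum_split1 (fun l => |t₂ l|) k₀, ht₂k, hR_def, abs_zero, zero_add]
      exact Finset.sum_congr rfl fun l hl => by
        rw [ht₂o l (Finset.mem_erase.1 hl).1]
    have hmu_t : mu β t = 2 * (bad t).card + 1 := by rw [mu, if_pos hsl]
    -- feasibility t₁
    have hb1 : ∀ k, |t₁ k| ≤ 1 := by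
      intro k
      rcases eq_or_ne k k₀ with rfl | hkk
      · rw [ht₁k, habs_b]; exact hm_le1
      · rw [ht₁o k hkk]; exact h1 k
    have hb2 : ∀ k, |t₂ k| ≤ 1 := by
      intro k
      rcases eq_or_ne k k₀ with rfl | hkk
      · rw [ht₂k]; simp
      · rw [ht₂o k hkk]; exact h1 k
    have hbud1 : ∑ k, |t₁ k| ≤ (β : ℝ) := by
      rw [hsum_t₁, habs_b]
      have : m ≤ |a| + s := min_le_right _ _
      have := hsum_t
      linarith
    have hbud2 : ∑ k, |t₂ k| ≤ (β : ℝ) := by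
      rw [hsum_t₂]
      have : (0:ℝ) ≤ |a| := abs_nonneg a
      linarith [hsum_t, h2]
    -- mu t₂
    have hsub2 : bad t₂ ⊆ (bad t).erase k₀ := by
      intro l hl
      have hlmem := mem_bad.1 hl
      rcases eq_or_ne l k₀ with rfl | hlk
      · rw [ht₂k] at hlmem; exact absurd (Or.inr (Or.inl rfl)) hlmem
      · refine Finset.mem_erase.2 ⟨hlk, mem_bad.2 ?_⟩
        rwa [ht₂o l hlk] at hlmem
    have hmu2 : mu β t₂ < mu β t := by
      have hc := card_bad_lt hk₀ hsub2
      rw [hmu_t, mu]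
      have : (if (∑ k, |t₂ k|) < (β:ℝ) then 1 else 0) ≤ 1 := by split <;> omega
      omega
    -- mu t₁
    have hmu1 : mu β t₁ < mu β t := by
      rcases min_cases 1 (|a| + s) with ⟨hmeq, _⟩ | ⟨hmeq, _⟩
      · -- m = 1, bv = sg a, integral
        have hint : t₁ k₀ = -1 ∨ t₁ k₀ = 0 ∨ t₁ k₀ = 1 := by
          rw [ht₁k, hbv_def, hm_def, hmeq, mul_one]
          rcases sg_cases a with h | h
          · exact Or.inr (Or.inr h)
          · exact Or.inl h
        have hsub1 : bad t₁ ⊆ (bad t).erase k₀ := by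
          intro l hl
          have hlmem := mem_bad.1 hl
          rcases eq_or_ne l k₀ with rfl | hlk
          · exact absurd hint hlmem
          · refine Finset.mem_erase.2 ⟨hlk, mem_bad.2 ?_⟩
            rwa [ht₁o l hlk] at hlmem
        have hc := card_bad_lt hk₀ hsub1
        rw [hmu_t, mu]
        have : (if (∑ k, |t₁ k|) < (β:ℝ) then 1 else 0) ≤ 1 := by split <;> omega
        omega
      · -- m = |a| + s, sum becomes tight
        have htight : ∑ k, |t₁ k| = (β : ℝ) := by
          rw [hsum_t₁, habs_b, hm_def, hmeq]
          simp only [hs_def]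
          linarith [hsum_t]
        have hsub1 : bad t₁ ⊆ bad t := by
          intro l hl
          have hlmem := mem_bad.1 hl
          rcases eq_or_ne l k₀ with rfl | hlk
          · exact hk₀
          · exact mem_bad.2 (by rwa [ht₁o l hlk] at hlmem)
        have hc := Finset.card_le_card hsub1
        rw [hmu_t, mu, htight, if_neg (lt_irrefl _)]
        omega
    -- convex combination
    refine ⟨t₁, t₂, ⟨hb1, hbud1, hmu1⟩, ⟨hb2, hbud2, hmu2⟩, ?_⟩
    refine convex_between hg t t₁ t₂ (|a| / |bv|)
      (by positivity) (by rw [div_le_one (by linarith)]; linarith) ?_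
    funext l
    simp only [Pi.add_apply, Pi.smul_apply, smul_eq_mul]
    rcases eq_or_ne l k₀ with rfl | hlk
    · rw [ht₁k, ht₂k]
      have hbne : |bv| ≠ 0 := by linarith
      have hsga : sg a * |a| = a := sg_mul_abs a hane
      have hbv2 : bv = sg a * |bv| := by rw [habs_b]
      have key : |a| * bv = a * |bv| := by
        calc |a| * bv = |a| * (sg a * |bv|) := by rw [← hbv2]
          _ = (sg a * |a|) * |bv| := by ring
          _ = a * |bv| := by rw [hsga]
      rw [← ha_def]
      field_simp
      linarith [key]
    · rw [ht₁o l hlk, ht₂o l hlk]; ring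
  · -- tight case
    have htight : ∑ k, |t k| = (β : ℝ) := le_antisymm h2 (not_lt.1 hsl)
    have hmu_t : mu β t = 2 * (bad t).card := by
      rw [mu, htight, if_neg (lt_irrefl _), add_zero]
    have hcard : 1 < (bad t).card := by
      by_contra hcc
      push_neg at hcc
      obtain ⟨k₀, hk₀⟩ := hb
      have h1c : (bad t).card = 1 := le_antisymm hcc (Finset.card_pos.2 ⟨k₀, hk₀⟩)
      obtain ⟨x, hx⟩ := Finset.card_eq_one.1 h1c
      have hxk : k₀ = x := by rw [hx] at hk₀; exact Finset.mem_singleton.1 hk₀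
      subst hxk
      have hk := mem_bad.1 hk₀
      have ha0 : 0 < |t k₀| := bad_abs_pos hk
      have ha1 : |t k₀| < 1 := bad_abs_lt hk (h1 k₀)
      have hint : ∀ l, l ≠ k₀ → (|t l| = 0 ∨ |t l| = 1) := by
        intro l hl
        have hnb : l ∉ bad t := by rw [hx]; simp [hl]
        have hok : t l = -1 ∨ t l = 0 ∨ t l = 1 := by
          by_contra hno; exact hnb (mem_bad.2 hno)
        rcases hok with h | h | h
        · right; rw [h]; norm_num
        · left; rw [h]; norm_num
        · right; rw [h]; norm_num
      have hsum : ∑ l ∈ Finset.univ.erase k₀, |t l| =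
          (((Finset.univ.erase k₀).filter (fun l => |t l| = 1)).card : ℝ) := by
        rw [← Finset.sum_boole]
        exact Finset.sum_congr rfl fun l hl => by
          rcases hint l (Finset.mem_erase.1 hl).1 with h | h <;> simp [h]
      set c := ((Finset.univ.erase k₀).filter (fun l => |t l| = 1)).card with hc_def
      have hsplit := sum_split1 (fun l => |t l|) k₀
      have heq : |t k₀| = (β : ℝ) - c := by
        rw [hsum] at hsplit; rw [← htight, hsplit]; ring
      have hz1 : (c : ℝ) < (β : ℝ) := by linarith
      have hz2 : (β : ℝ) < (c : ℝ) + 1 := by linarith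
      have hn1 : c < β := by exact_mod_cast hz1
      have hn2 : β < c + 1 := by exact_mod_cast (by push_cast; linarith : (β:ℝ) < ((c+1 : ℕ) : ℝ))
      omega
    obtain ⟨j, hj, k, hk', hjk⟩ := Finset.one_lt_card.1 hcard
    have hbj := mem_bad.1 hj
    have hbk := mem_bad.1 hk'
    set a := t j with ha_def
    set b := t k with hb_def
    have hane : a ≠ 0 := by push_neg at hbj; exact hbj.2.1
    have hbne : b ≠ 0 := by push_neg at hbk; exact hbk.2.1
    have ha0 : 0 < |a| := bad_abs_pos hbj
    have ha1 : |a| < 1 := bad_abs_lt hbj (h1 j)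
    have hb0 : 0 < |b| := bad_abs_pos hbk
    have hb1' : |b| < 1 := bad_abs_lt hbk (h1 k)
    set ε₁ := min (1 - |a|) |b| with hε₁_def
    set ε₂ := min |a| (1 - |b|) with hε₂_def
    have hε₁0 : 0 < ε₁ := lt_min (by linarith) hb0
    have hε₂0 : 0 < ε₂ := lt_min ha0 (by linarith)
    set x₁ := a + sg a * ε₁ with hx₁_def
    set y₁ := b - sg b * ε₁ with hy₁_def
    set x₂ := a - sg a * ε₂ with hx₂_def
    set y₂ := b + sg b * ε₂ with hy₂_def
    have hax₁ : |x₁| = |a| + ε₁ := abs_add_sg a ε₁ hε₁0.le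
    have hay₁ : |y₁| = |b| - ε₁ := abs_sub_sg b ε₁ hε₁0.le (min_le_right _ _)
    have hax₂ : |x₂| = |a| - ε₂ := abs_sub_sg a ε₂ hε₂0.le (min_le_left _ _)
    have hay₂ : |y₂| = |b| + ε₂ := abs_add_sg b ε₂ hε₂0.le
    set t₁ := Function.update (Function.update t j x₁) k y₁ with ht₁_def
    set t₂ := Function.update (Function.update t j x₂) k y₂ with ht₂_def
    have ht₁j : t₁ j = x₁ := by
      rw [ht₁_def, Function.update_of_ne hjk, Function.update_self]
    have ht₁k : t₁ k = y₁ := by rw [ht₁_def, Function.update_self]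
    have ht₂j : t₂ j = x₂ := by
      rw [ht₂_def, Function.update_of_ne hjk, Function.update_self]
    have ht₂k : t₂ k = y₂ := by rw [ht₂_def, Function.update_self]
    have ht₁o : ∀ l, l ≠ j → l ≠ k → t₁ l = t l := fun l hlj hlk => by
      rw [ht₁_def, Function.update_of_ne hlk, Function.update_of_ne hlj]
    have ht₂o : ∀ l, l ≠ j → l ≠ k → t₂ l = t l := fun l hlj hlk => by
      rw [ht₂_def, Function.update_of_ne hlk, Function.update_of_ne hlj]
    set R := ∑ l ∈ (Finset.univ.erase j).erase k, |t l| with hR_def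
    have hsum_t : ∑ l, |t l| = |a| + |b| + R := sum_split2 (fun l => |t l|) j k hjk
    have hsum_t₁ : ∑ l, |t₁ l| = |x₁| + |y₁| + R := by
      rw [sum_split2 (fun l => |t₁ l|) j k hjk, ht₁j, ht₁k, hR_def]
      congr 1
      exact Finset.sum_congr rfl fun l hl => by
        have hm1 := Finset.mem_erase.1 hl
        have hm2 := Finset.mem_erase.1 hm1.2
        rw [ht₁o l hm2.1 hm1.1]
    have hsum_t₂ : ∑ l, |t₂ l| = |x₂| + |y₂| + R := by
      rw [sum_split2 (fun l => |t₂ l|) j k hjk, ht₂j, ht₂k, hR_def]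
      congr 1
      exact Finset.sum_congr rfl fun l hl => by
        have hm1 := Finset.mem_erase.1 hl
        have hm2 := Finset.mem_erase.1 hm1.2
        rw [ht₂o l hm2.1 hm1.1]
    have htot₁ : ∑ l, |t₁ l| = (β : ℝ) := by
      rw [hsum_t₁, hax₁, hay₁]; rw [hsum_t] at htight; linarith
    have htot₂ : ∑ l, |t₂ l| = (β : ℝ) := by
      rw [hsum_t₂, hax₂, hay₂]; rw [hsum_t] at htight; linarith
    have hbd1 : ∀ l, |t₁ l| ≤ 1 := by
      intro l
      rcases eq_or_ne l j with rfl | hlj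
      · rw [ht₁j, hax₁]; linarith [min_le_left (1 - |a|) |b|]
      · rcases eq_or_ne l k with rfl | hlk
        · rw [ht₁k, hay₁]; linarith
        · rw [ht₁o l hlj hlk]; exact h1 l
    have hbd2 : ∀ l, |t₂ l| ≤ 1 := by
      intro l
      rcases eq_or_ne l j with rfl | hlj
      · rw [ht₂j, hax₂]; linarith
      · rcases eq_or_ne l k with rfl | hlk
        · rw [ht₂k, hay₂]; linarith [min_le_right |a| (1 - |b|)]
        · rw [ht₂o l hlj hlk]; exact h1 l
    have hsga : sg a * |a| = a := sg_mul_abs a hane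
    have hsgb : sg b * |b| = b := sg_mul_abs b hbne
    have hmu1 : mu β t₁ < mu β t := by
      rcases min_cases (1 - |a|) |b| with ⟨hmeq, _⟩ | ⟨hmeq, _⟩
      · have hx : x₁ = sg a := by
          rw [hx₁_def, hε₁_def, hmeq]; linear_combination -hsga
        have hint : t₁ j = -1 ∨ t₁ j = 0 ∨ t₁ j = 1 := by
          rw [ht₁j, hx]
          rcases sg_cases a with h | h
          · exact Or.inr (Or.inr h)
          · exact Or.inl h
        have hsub : bad t₁ ⊆ (bad t).erase j := by
          intro l hl
          have hlmem := mem_bad.1 hl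
          rcases eq_or_ne l j with rfl | hlj
          · exact absurd hint hlmem
          · rcases eq_or_ne l k with rfl | hlk
            · exact Finset.mem_erase.2 ⟨hlj, hk'⟩
            · exact Finset.mem_erase.2
                ⟨hlj, mem_bad.2 (by rwa [ht₁o l hlj hlk] at hlmem)⟩
        have hc := card_bad_lt hj hsub
        rw [hmu_t, mu, htot₁, if_neg (lt_irrefl _)]
        omega
      · have hy : y₁ = 0 := by
          rw [hy₁_def, hε₁_def, hmeq]; linear_combination -hsgb
        have hint : t₁ k = -1 ∨ t₁ k = 0 ∨ t₁ k = 1 :=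
          Or.inr (Or.inl (by rw [ht₁k, hy]))
        have hsub : bad t₁ ⊆ (bad t).erase k := by
          intro l hl
          have hlmem := mem_bad.1 hl
          rcases eq_or_ne l k with rfl | hlk
          · exact absurd hint hlmem
          · rcases eq_or_ne l j with rfl | hlj
            · exact Finset.mem_erase.2 ⟨hlk, hj⟩
            · exact Finset.mem_erase.2
                ⟨hlk, mem_bad.2 (by rwa [ht₁o l hlj hlk] at hlmem)⟩
        have hc := card_bad_lt hk' hsub
        rw [hmu_t, mu, htot₁, if_neg (lt_irrefl _)]
        omega
    have hmu2 : mu β t₂ < mu β t := by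
      rcases min_cases |a| (1 - |b|) with ⟨hmeq, _⟩ | ⟨hmeq, _⟩
      · have hx : x₂ = 0 := by
          rw [hx₂_def, hε₂_def, hmeq]; linear_combination -hsga
        have hint : t₂ j = -1 ∨ t₂ j = 0 ∨ t₂ j = 1 :=
          Or.inr (Or.inl (by rw [ht₂j, hx]))
        have hsub : bad t₂ ⊆ (bad t).erase j := by
          intro l hl
          have hlmem := mem_bad.1 hl
          rcases eq_or_ne l j with rfl | hlj
          · exact absurd hint hlmem
          · rcases eq_or_ne l k with rfl | hlk
            · exact Finset.mem_erase.2 ⟨hlj, hk'⟩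
            · exact Finset.mem_erase.2
                ⟨hlj, mem_bad.2 (by rwa [ht₂o l hlj hlk] at hlmem)⟩
        have hc := card_bad_lt hj hsub
        rw [hmu_t, mu, htot₂, if_neg (lt_irrefl _)]
        omega
      · have hy : y₂ = sg b := by
          rw [hy₂_def, hε₂_def, hmeq]; linear_combination -hsgb
        have hint : t₂ k = -1 ∨ t₂ k = 0 ∨ t₂ k = 1 := by
          rw [ht₂k, hy]
          rcases sg_cases b with h | h
          · exact Or.inr (Or.inr h)
          · exact Or.inl h
        have hsub : bad t₂ ⊆ (bad t).erase k := by
          intro l hl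
          have hlmem := mem_bad.1 hl
          rcases eq_or_ne l k with rfl | hlk
          · exact absurd hint hlmem
          · rcases eq_or_ne l j with rfl | hlj
            · exact Finset.mem_erase.2 ⟨hlk, hj⟩
            · exact Finset.mem_erase.2
                ⟨hlk, mem_bad.2 (by rwa [ht₂o l hlj hlk] at hlmem)⟩
        have hc := card_bad_lt hk' hsub
        rw [hmu_t, mu, htot₂, if_neg (lt_irrefl _)]
        omega
    refine ⟨t₁, t₂, ⟨hbd1, by rw [htot₁], hmu1⟩, ⟨hbd2, by rw [htot₂], hmu2⟩, ?_⟩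
    have hεs : ε₁ + ε₂ ≠ 0 := by positivity
    refine convex_between hg t t₁ t₂ (ε₂ / (ε₁ + ε₂)) (by positivity)
      (by rw [div_le_one (by positivity)]; linarith) ?_
    funext l
    simp only [Pi.add_apply, Pi.smul_apply, smul_eq_mul]
    rcases eq_or_ne l j with rfl | hlj
    · rw [ht₁j, ht₂j, ← ha_def, hx₁_def, hx₂_def]
      field_simp
      ring
    · rcases eq_or_ne l k with rfl | hlk
      · rw [ht₁k, ht₂k, ← hb_def, hy₁_def, hy₂_def]
        field_simp
        ring
      · rw [ht₁o l hlj hlk, ht₂o l hlj hlk]; ring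

lemma key {n : ℕ} (β : ℕ) (g : (Fin n → ℝ) → ℝ) (hg : ConvexOn ℝ Set.univ g) :
    ∀ (N : ℕ) (t : Fin n → ℝ), mu β t ≤ N → (∀ k, |t k| ≤ 1) → (∑ k, |t k|) ≤ (β : ℝ) →
    ∃ σ : Fin n → ℝ, (∀ k, σ k = -1 ∨ σ k = 0 ∨ σ k = 1) ∧
      (∑ k, |σ k|) ≤ (β : ℝ) ∧ g t ≤ g σ := by
  intro N
  induction N with
  | zero =>
    intro t hμ h1 h2
    have hbad : bad t = ∅ := by
      by_contra hne
      have := Finset.card_pos.2 (Finset.nonempty_of_ne_empty hne)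
      have : 2 * (bad t).card ≤ mu β t := Nat.le_add_right _ _
      omega
    refine ⟨t, fun k => ?_, h2, le_refl _⟩
    by_contra hno
    exact Finset.notMem_empty k (hbad ▸ mem_bad.2 hno)
  | succ N ih =>
    intro t hμ h1 h2
    by_cases hbad : bad t = ∅
    · refine ⟨t, fun k => ?_, h2, le_refl _⟩
      by_contra hno
      exact Finset.notMem_empty k (hbad ▸ mem_bad.2 hno)
    · obtain ⟨t₁, t₂, ⟨hb1, hs1, hm1⟩, ⟨hb2, hs2, hm2⟩, hle⟩ :=
        step β g hg t h1 h2 (Finset.nonempty_of_ne_empty hbad)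
      rcases max_cases (g t₁) (g t₂) with ⟨hmx, _⟩ | ⟨hmx, _⟩
      · obtain ⟨σ, hσ1, hσ2, hσ3⟩ := ih t₁ (by omega) hb1 hs1
        exact ⟨σ, hσ1, hσ2, by rw [hmx] at hle; linarith⟩
      · obtain ⟨σ, hσ1, hσ2, hσ3⟩ := ih t₂ (by omega) hb2 hs2
        exact ⟨σ, hσ1, hσ2, by rw [hmx] at hle; linarith⟩

theorem convex_sup_attained_at_vertex (n : ℕ) (ub uh : Fin n → ℝ)
    (huh : ∀ k, 0 < uh k) (β : ℕ)
    (f : (Fin n → ℝ) → ℝ) (hconv : ConvexOn ℝ Set.univ f) (hcont : Continuous f) :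
    ∃ σ : Fin n → ℝ, (∀ k, σ k = -1 ∨ σ k = 0 ∨ σ k = 1) ∧
      (∑ k, |σ k|) ≤ (β : ℝ) ∧
      (fun k => ub k + uh k * σ k) ∈ budgetSet n ub uh (β : ℝ) ∧
      ∀ u ∈ budgetSet n ub uh (β : ℝ), f u ≤ f (fun k => ub k + uh k * σ k) := by
  classical
  set g : (Fin n → ℝ) → ℝ := fun t => f (fun k => ub k + uh k * t k) with hg_def
  have hg : ConvexOn ℝ Set.univ g := by
    refine ⟨convex_univ, ?_⟩
    intro x _ y _ p q hp hq hpq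
    have h := hconv.2 (Set.mem_univ (fun k => ub k + uh k * x k))
      (Set.mem_univ (fun k => ub k + uh k * y k)) hp hq hpq
    have harg : (fun k => ub k + uh k * (p • x + q • y) k) =
        p • (fun k => ub k + uh k * x k) + q • (fun k => ub k + uh k * y k) := by
      funext k
      simp only [Pi.add_apply, Pi.smul_apply, smul_eq_mul]
      linear_combination (-(ub k)) * hpq
    simp only [hg_def, smul_eq_mul] at *
    rw [harg]
    exact h
  -- vertex finset
  set S : Finset (Fin n → ℝ) :=
    ((Finset.univ : Finset (Fin n → Fin 3)).image
      (fun c => fun k => ((c k : ℕ) : ℝ) - 1)).filter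
      (fun σ => (∀ k, σ k = -1 ∨ σ k = 0 ∨ σ k = 1) ∧ (∑ k, |σ k|) ≤ (β : ℝ)) with hS_def
  have hmemS : ∀ σ : Fin n → ℝ, (∀ k, σ k = -1 ∨ σ k = 0 ∨ σ k = 1) →
      (∑ k, |σ k|) ≤ (β : ℝ) → σ ∈ S := by
    intro σ hσ1 hσ2
    refine Finset.mem_filter.2 ⟨Finset.mem_image.2 ⟨fun k =>
      if σ k = -1 then (0 : Fin 3) else if σ k = 0 then 1 else 2, Finset.mem_univ _, ?_⟩,
      hσ1, hσ2⟩
    funext k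
    rcases hσ1 k with h | h | h <;> simp [h] <;> norm_num
  have hS_ne : S.Nonempty := by
    refine ⟨(fun _ => (0 : ℝ)), hmemS _ (fun k => Or.inr (Or.inl rfl)) ?_⟩
    simp [Nat.cast_nonneg]
  obtain ⟨σs, hσsS, hσsmax⟩ := S.exists_max_image g hS_ne
  obtain ⟨_, hσs1, hσs2⟩ := Finset.mem_filter.1 hσsS
  have hσsabs : ∀ k, |σs k| ≤ 1 := by
    intro k; rcases hσs1 k with h | h | h <;> rw [h] <;> norm_num
  refine ⟨σs, hσs1, hσs2, ⟨?_, ?_⟩, ?_⟩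
  · intro k
    have : ub k + uh k * σs k - ub k = uh k * σs k := by ring
    rw [this, abs_mul, abs_of_pos (huh k)]
    calc uh k * |σs k| ≤ uh k * 1 := by
          exact mul_le_mul_of_nonneg_left (hσsabs k) (huh k).le
      _ = uh k := mul_one _
  · have : ∀ k, |ub k + uh k * σs k - ub k| / uh k = |σs k| := by
      intro k
      have h0 : ub k + uh k * σs k - ub k = uh k * σs k := by ring
      rw [h0, abs_mul, abs_of_pos (huh k)]
      exact mul_div_cancel_left₀ _ (huh k).ne'
    rw [Finset.sum_congr rfl fun k _ => this k]
    exact hσs2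
  · intro u hu
    obtain ⟨hu1, hu2⟩ := hu
    set t : Fin n → ℝ := fun k => (u k - ub k) / uh k with ht_def
    have habs : ∀ k, |t k| = |u k - ub k| / uh k := by
      intro k
      rw [ht_def, abs_div, abs_of_pos (huh k)]
    have h1 : ∀ k, |t k| ≤ 1 := by
      intro k
      rw [habs k, div_le_one (huh k)]
      exact hu1 k
    have h2 : (∑ k, |t k|) ≤ (β : ℝ) := by
      rw [Finset.sum_congr rfl fun k _ => habs k]
      exact hu2
    obtain ⟨σ, hσ1, hσ2, hσ3⟩ := key β g hg (mu β t) t (le_refl _) h1 h2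
    have hgt : g t = f u := by
      have harg : (fun k => ub k + uh k * t k) = u := by
        funext k
        have htk : t k = (u k - ub k) / uh k := rfl
        rw [htk]
        field_simp [(huh k).ne']
        ring
      show f (fun k => ub k + uh k * t k) = f u
      rw [harg]
    have hσS : σ ∈ S := hmemS σ hσ1 hσ2
    calc f u = g t := hgt.symm
      _ ≤ g σ := hσ3
      _ ≤ g σs := hσsmax σ hσS
      _ = f (fun k => ub k + uh k * σs k) := rfl
end

section
/- For the one-dimensional budgeted set with T periods and integer β ≤ T, the maximum of a nonnegative linear functional Σ_t c_t · (ũ_t − ū_t) over U(β) equals the sum of the β largest values among {c_t û_t : t ∈ T} when all c_t ≥ 0. -/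
/-!
Write `w t = c t * uh t ≥ 0` and `x t = |u t - ub t| / uh t`. Over `U(β)` the objective is at most
`∑ w t * x t` with `0 ≤ x ≤ 1` and `∑ x ≤ β`, and on this capped simplex a linear functional with
nonnegative weights is maximised at an indicator of `β` coordinates. For a `β`-set `A` of maximal
weight, an exchange argument puts every weight outside `A` below every weight inside, and with a
threshold `m` between the two, `∑ w x ≤ ∑_A w x + m (β - ∑_A x) ≤ ∑_A w`. The maximum is attained
by moving `u` to `ub + uh` exactly on `A`.
-/

def budgetSet1 {T : Type*} [Fintype T] (ub uh : T → ℝ) (β : ℝ) : Set (T → ℝ) :=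
  {u | (∀ t, |u t - ub t| ≤ uh t) ∧ ∑ t, |u t - ub t| / uh t ≤ β}

open Finset

section Knapsack

variable {ι : Type*}

theorem apply_le_of_maximal_sum_powersetCard {M : Type*} [AddCommMonoid M] [PartialOrder M]
    [IsOrderedCancelAddMonoid M] [DecidableEq ι] {S A : Finset ι} {k : ℕ} {w : ι → M}
    (hA : A ∈ S.powersetCard k) (hmax : ∀ B ∈ S.powersetCard k, ∑ i ∈ B, w i ≤ ∑ i ∈ A, w i)
    {s t : ι} (hs : s ∈ A) (htS : t ∈ S) (htA : t ∉ A) : w t ≤ w s := by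
  rw [mem_powersetCard] at hA
  have htA' : t ∉ A.erase s := fun h => htA (mem_of_mem_erase h)
  have hB : insert t (A.erase s) ∈ S.powersetCard k := by
    rw [mem_powersetCard, card_insert_of_notMem htA', card_erase_of_mem hs]
    refine ⟨insert_subset htS ((erase_subset s A).trans hA.1), ?_⟩
    have := card_pos.mpr ⟨s, hs⟩
    omega
  have := hmax _ hB
  rw [sum_insert htA', ← add_sum_erase A w hs, add_comm (w t), add_comm (w s)] at this
  exact le_of_add_le_add_left this

variable [Fintype ι] {w x : ι → ℝ}

theorem sum_mul_le_sum_of_threshold (A : Finset ι) {m : ℝ} (hm : 0 ≤ m)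
    (hout : ∀ i ∉ A, w i ≤ m) (hin : ∀ i ∈ A, m ≤ w i)
    (hx0 : ∀ i, 0 ≤ x i) (hx1 : ∀ i, x i ≤ 1) (hsum : ∑ i, x i ≤ #A) :
    ∑ i, w i * x i ≤ ∑ i ∈ A, w i := by
  classical
  have hout_sum : ∑ i ∈ Aᶜ, w i * x i ≤ m * ∑ i ∈ Aᶜ, x i := by
    rw [mul_sum]
    exact sum_le_sum fun i hi => mul_le_mul_of_nonneg_right (hout i (mem_compl.mp hi)) (hx0 i)
  have hslack : ∑ i ∈ Aᶜ, x i ≤ ∑ i ∈ A, (1 - x i) := by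
    rw [sum_sub_distrib, sum_const, nsmul_one]
    rw [← sum_add_sum_compl A x] at hsum
    linarith
  have hin_sum : m * ∑ i ∈ A, (1 - x i) ≤ ∑ i ∈ A, w i * (1 - x i) := by
    rw [mul_sum]
    exact sum_le_sum fun i hi => mul_le_mul_of_nonneg_right (hin i hi) (by linarith [hx1 i])
  calc ∑ i, w i * x i = ∑ i ∈ A, w i * x i + ∑ i ∈ Aᶜ, w i * x i :=
        (sum_add_sum_compl A _).symm
    _ ≤ ∑ i ∈ A, w i * x i + ∑ i ∈ A, w i * (1 - x i) := by
        gcongr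
        exact hout_sum.trans ((mul_le_mul_of_nonneg_left hslack hm).trans hin_sum)
    _ = ∑ i ∈ A, w i := by rw [← sum_add_distrib]; exact sum_congr rfl fun i _ => by ring

theorem sum_mul_le_sup'_powersetCard {k : ℕ} (hw : ∀ i, 0 ≤ w i)
    (hx0 : ∀ i, 0 ≤ x i) (hx1 : ∀ i, x i ≤ 1) (hsum : ∑ i, x i ≤ k)
    (hne : (univ.powersetCard k).Nonempty) :
    ∑ i, w i * x i ≤ (univ.powersetCard k).sup' hne (fun A => ∑ i ∈ A, w i) := by
  classical
  obtain ⟨A, hA, hAeq⟩ := exists_mem_eq_sup' hne (fun A => ∑ i ∈ A, w i)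
  have hmax : ∀ B ∈ univ.powersetCard k, ∑ i ∈ B, w i ≤ ∑ i ∈ A, w i :=
    fun B hB => hAeq ▸ le_sup' (fun A => ∑ i ∈ A, w i) hB
  have hcard : #A = k := (mem_powersetCard.mp hA).2
  rw [hAeq]
  rcases A.eq_empty_or_nonempty with rfl | hAne
  · subst hcard
    have hx : ∀ i, x i = 0 := fun i =>
      (sum_eq_zero_iff_of_nonneg fun i _ => hx0 i).mp
        (le_antisymm (by simpa using hsum) (sum_nonneg fun i _ => hx0 i)) i (mem_univ i)
    simp [hx]
  · refine sum_mul_le_sum_of_threshold A (m := A.inf' hAne w)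
      ((le_inf'_iff hAne w).mpr fun i _ => hw i)
      (fun i hi => (le_inf'_iff hAne w).mpr fun s hs =>
        apply_le_of_maximal_sum_powersetCard hA hmax hs (mem_univ i) hi)
      (fun i hi => inf'_le w hi) hx0 hx1 (hcard ▸ hsum)

end Knapsack

section Budget

variable {T : Type*} [Fintype T] {ub uh c : T → ℝ}

theorem sum_mul_sub_le_sup'_of_mem_budgetSet1 (huh : ∀ t, 0 < uh t) (hc : ∀ t, 0 ≤ c t) {β : ℕ}
    (hne : (univ.powersetCard β).Nonempty) {u : T → ℝ} (hu : u ∈ budgetSet1 ub uh β) :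
    ∑ t, c t * (u t - ub t) ≤ (univ.powersetCard β).sup' hne (fun A => ∑ t ∈ A, c t * uh t) := by
  obtain ⟨hbox, hbudget⟩ := hu
  calc ∑ t, c t * (u t - ub t)
      ≤ ∑ t, c t * uh t * (|u t - ub t| / uh t) := sum_le_sum fun t _ => by
        rw [mul_assoc, mul_div_cancel₀ _ (huh t).ne']
        exact mul_le_mul_of_nonneg_left (le_abs_self _) (hc t)
    _ ≤ _ := sum_mul_le_sup'_powersetCard (fun t => mul_nonneg (hc t) (huh t).le)
        (fun t => div_nonneg (abs_nonneg _) (huh t).le)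
        (fun t => (div_le_one (huh t)).mpr (hbox t)) hbudget hne

theorem add_ite_mem_mem_budgetSet1 [DecidableEq T] (huh : ∀ t, 0 < uh t) {β : ℕ} {A : Finset T}
    (hA : #A ≤ β) : (fun t => ub t + if t ∈ A then uh t else 0) ∈ budgetSet1 ub uh β := by
  have hdev : ∀ t, |(ub t + if t ∈ A then uh t else 0) - ub t| = if t ∈ A then uh t else 0 :=
    fun t => by split_ifs <;> simp [abs_of_pos (huh t)]
  refine ⟨fun t => ?_, ?_⟩
  · rw [hdev]
    split_ifs
    exacts [le_rfl, (huh t).le]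
  · have hratio : ∀ t, (if t ∈ A then uh t else 0) / uh t = if t ∈ A then 1 else 0 :=
      fun t => by split_ifs <;> simp [(huh t).ne']
    simp only [hdev, hratio, sum_ite_mem, univ_inter, sum_const, nsmul_one]
    exact_mod_cast hA

end Budget

theorem budget_linear_max_eq_sum_largest_general {T : Type*} [Fintype T]
    (ub uh c : T → ℝ) (huh : ∀ t, 0 < uh t) (hc : ∀ t, 0 ≤ c t)
    (β : ℕ)
    (hne : ((Finset.univ : Finset T).powersetCard β).Nonempty) :
    IsGreatest ((fun u => ∑ t, c t * (u t - ub t)) '' budgetSet1 ub uh (β : ℝ))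
      (((Finset.univ : Finset T).powersetCard β).sup' hne
        (fun A => ∑ t ∈ A, c t * uh t)) := by
  classical
  refine ⟨?_, ?_⟩
  · obtain ⟨A, hA, hAeq⟩ := exists_mem_eq_sup' hne (fun A => ∑ t ∈ A, c t * uh t)
    refine ⟨_, add_ite_mem_mem_budgetSet1 huh (mem_powersetCard.mp hA).2.le, ?_⟩
    simp only [hAeq, add_sub_cancel_left, mul_ite, mul_zero, sum_ite_mem, univ_inter]
  · rintro _ ⟨u, hu, rfl⟩
    exact sum_mul_sub_le_sup'_of_mem_budgetSet1 huh hc hne hu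

theorem budget_linear_max_eq_sum_largest {T : Type*} [Fintype T] [DecidableEq T]
    (ub uh c : T → ℝ) (huh : ∀ t, 0 < uh t) (hc : ∀ t, 0 ≤ c t)
    (β : ℕ) (hβ : β ≤ Fintype.card T)
    (hne : ((Finset.univ : Finset T).powersetCard β).Nonempty) :
    IsGreatest ((fun u => ∑ t, c t * (u t - ub t)) '' budgetSet1 ub uh (β : ℝ))
      (((Finset.univ : Finset T).powersetCard β).sup' hne
        (fun A => ∑ t ∈ A, c t * uh t)) :=
  budget_linear_max_eq_sum_largest_general ub uh c huh hc β hne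
end
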